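/- Let V be a vector space over a field of characteristic 0, w: T(V) → T(V) the linear map acting on the degree-n component V^{⊗n} as the left-normed bracketing map v₁⊗···⊗vₙ ↦ [...[v₁,v₂],...,vₙ]. Then the sequence 0 → Lₙ(V) → V^{⊗n} → V^{⊗n} is exact, where the second map is the inclusion of the degree-n part of the free Lie algebra and the third map is n·id − w; in particular (1/n)·w restricted to V^{⊗n} is a projection onto Lₙ(V). -/

import Mathlib

/-!
Extend the bracketing map to all of `T(V)` as the linear map `θ = dynkinMap` with `θ 1 = 0`
and `θ (x v) = ⁅θ x, v⁆ + ε(x) v`, `ε` the augmentation; it is read off a right action of `T(V)`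
on `k × T(V)` whose `k`-coordinate records `ε`. Induction over the Lie span gives
`θ (x a) = ⁅θ x, a⁆` for Lie elements `a` and `ε x = 0`, so on Lie elements `θ` obeys the
Leibniz rule `θ ⁅a, b⁆ = ⁅θ a, b⁆ + ⁅a, θ b⁆`, like the Euler derivation
`D = eulerDeriv` (`D v = v`). Hence `θ = D = n • id` on `Lₙ(V)` (Dynkin–Specht–Wever),
while `θ` maps `V^{⊗n}` into `Lₙ(V)`; so `n • x = θ x` forces `x ∈ L(V)` once `n` is
invertible.
-/

/-- The left-normed iterated commutator `[...[[a₁,a₂],a₃],...,aₙ]` of a list,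
with `[a,b] = a*b - b*a`; `0` for the empty list. -/
def lnbList {A : Type*} [Ring A] : List A → A
  | [] => 0
  | a :: l => l.foldl (fun x y => x * y - y * x) a

attribute [local instance] LieRing.ofAssociativeRing

section LeftNormed

variable {k A : Type*} [CommRing k] [Ring A] [Algebra k A]

theorem foldl_lie_mem_lieSpan {s : Set A} (l : List A) (hl : ∀ b ∈ l, b ∈ s) {a : A}
    (ha : a ∈ LieSubalgebra.lieSpan k A s) :
    l.foldl (fun x y => x * y - y * x) a ∈ LieSubalgebra.lieSpan k A s := by
  induction l generalizing a with
  | nil => exact ha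
  | cons b l ih =>
    simp only [List.forall_mem_cons] at hl
    exact ih hl.2 (LieSubalgebra.lie_mem _ ha (LieSubalgebra.subset_lieSpan hl.1))

theorem lnbList_mem_lieSpan {s : Set A} {l : List A} (hl : ∀ b ∈ l, b ∈ s) :
    lnbList l ∈ LieSubalgebra.lieSpan k A s := by
  cases l with
  | nil => exact zero_mem _
  | cons a l =>
    simp only [List.forall_mem_cons] at hl
    exact foldl_lie_mem_lieSpan l hl.2 (LieSubalgebra.subset_lieSpan hl.1)

theorem foldl_lie_mem_pow {M : Submodule k A} (l : List A) (hl : ∀ b ∈ l, b ∈ M) {m : ℕ}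
    {a : A} (ha : a ∈ M ^ m) :
    l.foldl (fun x y => x * y - y * x) a ∈ M ^ (m + l.length) := by
  induction l generalizing a m with
  | nil => exact ha
  | cons b l ih =>
    simp only [List.forall_mem_cons] at hl
    have hab : a * b - b * a ∈ M ^ (m + 1) := sub_mem
      (pow_succ M m ▸ Submodule.mul_mem_mul ha hl.1)
      (pow_succ' M m ▸ Submodule.mul_mem_mul hl.1 ha)
    simpa [List.length_cons, add_assoc, add_comm 1] using ih hl.2 hab

theorem lnbList_mem_pow {M : Submodule k A} {l : List A} (hl : ∀ b ∈ l, b ∈ M) :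
    lnbList l ∈ M ^ l.length := by
  cases l with
  | nil => exact zero_mem _
  | cons a l =>
    simp only [List.forall_mem_cons] at hl
    simpa [lnbList, add_comm] using
      foldl_lie_mem_pow l hl.2 (m := 1) (by rw [pow_one]; exact hl.1)

end LeftNormed

namespace TensorAlgebra

open TrivSqZeroExt MulOpposite

variable {k V : Type*} [CommRing k] [AddCommGroup V] [Module k V]

-- `x ↦ (x, D x)` into the square-zero extension; multiplicativity is the Leibniz rule for `D`.
noncomputable def eulerDualHom :
    TensorAlgebra k V →ₐ[k] TrivSqZeroExt (TensorAlgebra k V) (TensorAlgebra k V) :=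
  lift k
    { toFun v := inl (ι k v) + inr (ι k v)
      map_add' v w := by simp only [map_add, inl_add, inr_add]; abel
      map_smul' c v := by simp [inl_smul, smul_add] }

noncomputable def eulerDeriv : TensorAlgebra k V →ₗ[k] TensorAlgebra k V where
  toFun x := (eulerDualHom x).snd
  map_add' x y := by simp
  map_smul' c x := by simp

theorem fst_eulerDualHom (x : TensorAlgebra k V) : (eulerDualHom x).fst = x := by
  suffices (fstHom k _ _).comp eulerDualHom = AlgHom.id k (TensorAlgebra k V) from
    AlgHom.congr_fun this x
  ext v
  simp [eulerDualHom]

theorem eulerDeriv_mul (x y : TensorAlgebra k V) :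
    eulerDeriv (x * y) = eulerDeriv x * y + x * eulerDeriv y := by
  simp [eulerDeriv, fst_eulerDualHom, add_comm]

theorem eulerDeriv_ι (v : V) : eulerDeriv (ι k v) = ι k v := by
  simp [eulerDeriv, eulerDualHom]

theorem eulerDeriv_algebraMap (r : k) :
    eulerDeriv (algebraMap k (TensorAlgebra k V) r) = 0 := by
  simp [eulerDeriv, algebraMap_eq_inl']

theorem eulerDeriv_of_mem_pow {m : ℕ} {x : TensorAlgebra k V}
    (hx : x ∈ LinearMap.range (ι k (M := V)) ^ m) : eulerDeriv x = (m : k) • x := by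
  induction hx using Submodule.pow_induction_on_left' with
  | algebraMap r => simp [eulerDeriv_algebraMap]
  | add x y i _ _ ihx ihy => rw [map_add, ihx, ihy, smul_add]
  | mem_mul a ha i z _ ihz =>
    obtain ⟨v, rfl⟩ := ha
    rw [eulerDeriv_mul, eulerDeriv_ι, ihz, mul_smul_comm, Nat.cast_succ, add_smul, one_smul,
      add_comm]

noncomputable def dynkinRep :
    TensorAlgebra k V →ₐ[k] (Module.End k (k × TensorAlgebra k V))ᵐᵒᵖ :=
  lift k <| (opLinearEquiv k).toLinearMap ∘ₗ
    LinearMap.mk₂ k (fun v p => ((0 : k), ⁅p.2, ι k v⁆ + p.1 • ι k v))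
      (fun v w p => by ext <;> simp [add_add_add_comm])
      (fun c v p => by ext <;> simp [Ring.lie_def, smul_sub, smul_comm c p.1])
      (fun v p q => by ext <;> simp [add_smul, add_add_add_comm])
      (fun c v p => by ext <;> simp [Ring.lie_def, smul_sub, smul_smul])

noncomputable def dynkinMap : TensorAlgebra k V →ₗ[k] TensorAlgebra k V where
  toFun x := ((dynkinRep x).unop (1, 0)).2
  map_add' x y := by simp
  map_smul' c x := by simp

theorem dynkinRep_ι (v : V) (p : k × TensorAlgebra k V) :
    (dynkinRep (ι k v)).unop p = ((0 : k), ⁅p.2, ι k v⁆ + p.1 • ι k v) := by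
  simp [dynkinRep]

theorem algebraMapInv_ι (v : V) : algebraMapInv (ι k v) = 0 := by
  simp [algebraMapInv]

theorem fst_dynkinRep (x : TensorAlgebra k V) (p : k × TensorAlgebra k V) :
    ((dynkinRep x).unop p).1 = algebraMapInv x * p.1 := by
  induction x using TensorAlgebra.induction generalizing p with
  | algebraMap r => simp [Algebra.algebraMap_eq_smul_one]
  | ι v => simp [dynkinRep_ι, algebraMapInv_ι]
  | mul a b ha hb => simp [ha, hb]; ring
  | add a b ha hb => simp [ha, hb, add_mul]

theorem dynkinMap_mul_ι (x : TensorAlgebra k V) (v : V) :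
    dynkinMap (x * ι k v) = ⁅dynkinMap x, ι k v⁆ + algebraMapInv x • ι k v := by
  simp [dynkinMap, dynkinRep_ι, fst_dynkinRep]

theorem dynkinMap_one : dynkinMap (1 : TensorAlgebra k V) = 0 := by
  simp [dynkinMap]

theorem dynkinMap_ι (v : V) : dynkinMap (ι k v) = ι k v := by
  simpa [dynkinMap_one] using dynkinMap_mul_ι (1 : TensorAlgebra k V) v

section FreeLie

local notation "L" => LieSubalgebra.lieSpan k (TensorAlgebra k V) (Set.range (ι k))

theorem algebraMapInv_eq_zero_of_mem_lieSpan {u : TensorAlgebra k V} (hu : u ∈ L) :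
    algebraMapInv u = 0 := by
  induction hu using LieSubalgebra.lieSpan_induction with
  | mem x hx => obtain ⟨v, rfl⟩ := hx; exact algebraMapInv_ι v
  | zero => exact map_zero _
  | add x y _ _ hx hy => rw [map_add, hx, hy, add_zero]
  | smul c x _ hx => rw [map_smul, hx, smul_zero]
  | lie x y _ _ _ _ => rw [Ring.lie_def, map_sub, map_mul, map_mul, mul_comm, sub_self]

theorem dynkinMap_mul_of_mem_lieSpan {a : TensorAlgebra k V} (ha : a ∈ L)
    {x : TensorAlgebra k V} (hx : algebraMapInv x = 0) :
    dynkinMap (x * a) = ⁅dynkinMap x, a⁆ := by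
  induction ha using LieSubalgebra.lieSpan_induction generalizing x with
  | mem a ha => obtain ⟨v, rfl⟩ := ha; rw [dynkinMap_mul_ι, hx, zero_smul, add_zero]
  | zero => simp
  | add a b _ _ ha hb => rw [mul_add, map_add, ha hx, hb hx, lie_add]
  | smul c a _ ha => rw [mul_smul_comm, map_smul, ha hx, lie_smul]
  | lie a b _ _ ha hb =>
    have hxa : algebraMapInv (x * a) = 0 := by rw [map_mul, hx, zero_mul]
    have hxb : algebraMapInv (x * b) = 0 := by rw [map_mul, hx, zero_mul]
    have hx_lie : x * ⁅a, b⁆ = x * a * b - x * b * a := by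
      rw [Ring.lie_def, mul_sub, mul_assoc, mul_assoc]
    rw [hx_lie, map_sub, hb hxa, ha hxb, ha hx, hb hx]
    simp only [Ring.lie_def]
    noncomm_ring

theorem dynkinMap_eq_eulerDeriv {u : TensorAlgebra k V} (hu : u ∈ L) :
    dynkinMap u = eulerDeriv u := by
  induction hu using LieSubalgebra.lieSpan_induction with
  | mem u hu => obtain ⟨v, rfl⟩ := hu; rw [dynkinMap_ι, eulerDeriv_ι]
  | zero => simp
  | add a b _ _ ha hb => rw [map_add, map_add, ha, hb]
  | smul c a _ ha => rw [map_smul, map_smul, ha]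
  | lie a b ha' hb' ha hb =>
    rw [Ring.lie_def, map_sub, map_sub,
      dynkinMap_mul_of_mem_lieSpan hb' (algebraMapInv_eq_zero_of_mem_lieSpan ha'),
      dynkinMap_mul_of_mem_lieSpan ha' (algebraMapInv_eq_zero_of_mem_lieSpan hb'), ha, hb,
      eulerDeriv_mul, eulerDeriv_mul]
    simp only [Ring.lie_def]
    noncomm_ring

theorem dynkinMap_eq_smul_of_mem_pow {n : ℕ} {u : TensorAlgebra k V} (hL : u ∈ L)
    (hu : u ∈ LinearMap.range (ι k (M := V)) ^ n) : dynkinMap u = (n : k) • u := by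
  rw [dynkinMap_eq_eulerDeriv hL, eulerDeriv_of_mem_pow hu]

theorem dynkinMap_mul_list_prod {x : TensorAlgebra k V} (hx : algebraMapInv x = 0)
    (l : List (TensorAlgebra k V)) (hl : ∀ a ∈ l, a ∈ L) :
    dynkinMap (x * l.prod) = l.foldl (fun y z => y * z - z * y) (dynkinMap x) := by
  induction l generalizing x with
  | nil => rw [List.prod_nil, mul_one, List.foldl_nil]
  | cons a l ih =>
    simp only [List.forall_mem_cons] at hl
    rw [List.prod_cons, ← mul_assoc, ih (by rw [map_mul, hx, zero_mul]) hl.2,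
      dynkinMap_mul_of_mem_lieSpan hl.1 hx, List.foldl_cons, Ring.lie_def]

theorem dynkinMap_list_prod (l : List (TensorAlgebra k V))
    (hl : ∀ a ∈ l, a ∈ Set.range (ι k)) :
    dynkinMap l.prod = lnbList l := by
  cases l with
  | nil => exact dynkinMap_one
  | cons a l =>
    simp only [List.forall_mem_cons] at hl
    obtain ⟨⟨v, rfl⟩, hl⟩ := hl
    rw [List.prod_cons, dynkinMap_mul_list_prod (algebraMapInv_ι v) l
      (fun b hb => LieSubalgebra.subset_lieSpan (hl b hb)), dynkinMap_ι]
    rfl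

theorem range_ι_pow_eq_span (n : ℕ) :
    LinearMap.range (ι k (M := V)) ^ n =
      Submodule.span k (Set.range fun v : Fin n → V => (List.ofFn fun i => ι k (v i)).prod) := by
  rw [Submodule.pow_eq_span_pow_set]
  congr 1
  ext x
  simp only [Set.mem_pow, Set.mem_range]
  constructor
  · rintro ⟨f, rfl⟩
    choose v hv using fun i => LinearMap.mem_range.mp (f i).2
    exact ⟨v, by simp only [hv]⟩
  · rintro ⟨v, rfl⟩
    exact ⟨fun i => ⟨ι k (v i), LinearMap.mem_range_self _ _⟩, rfl⟩

theorem dynkinMap_mem_lieSpan_inf_pow {n : ℕ} {x : TensorAlgebra k V}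
    (hx : x ∈ LinearMap.range (ι k (M := V)) ^ n) :
    dynkinMap x ∈ L ∧ dynkinMap x ∈ LinearMap.range (ι k (M := V)) ^ n := by
  suffices h : dynkinMap x ∈ (L).toSubmodule ⊓ LinearMap.range (ι k (M := V)) ^ n from
    Submodule.mem_inf.mp h
  rw [range_ι_pow_eq_span] at hx
  refine (Submodule.map_span_le _ _ _).mpr ?_ (Submodule.mem_map_of_mem hx)
  rintro _ ⟨v, rfl⟩
  have hv : ∀ a ∈ List.ofFn fun i => ι k (v i), a ∈ Set.range (ι k) := by
    simp [List.mem_ofFn]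
  rw [dynkinMap_list_prod _ hv]
  have hpow := lnbList_mem_pow (M := LinearMap.range (ι k (M := V))) hv
  rw [List.length_ofFn] at hpow
  exact ⟨lnbList_mem_lieSpan hv, hpow⟩

theorem eqOn_dynkinMap_of_eq_lnbList {n : ℕ} (w : TensorAlgebra k V →ₗ[k] TensorAlgebra k V)
    (hw : ∀ v : Fin n → V,
      w ((List.ofFn fun i => ι k (v i)).prod) = lnbList (List.ofFn fun i => ι k (v i))) :
    Set.EqOn w dynkinMap (LinearMap.range (ι k (M := V)) ^ n : Submodule k _) := by
  rw [range_ι_pow_eq_span]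
  refine LinearMap.eqOn_span' ?_
  rintro _ ⟨v, rfl⟩
  rw [hw, dynkinMap_list_prod]
  simp [List.mem_ofFn]

end FreeLie

end TensorAlgebra

open TensorAlgebra in
/-- Let `w` act on `V^{⊗n} ⊆ T(V)` as the left-normed bracketing map.  Then
`0 → Lₙ(V) → V^{⊗n} → V^{⊗n}` is exact, the last map being `n·id − w`: for
`x ∈ V^{⊗n}`, `n·x − w x = 0` iff `x` lies in the free Lie algebra `L(V)` (so in its
degree-`n` part `Lₙ(V)`); in particular `(1/n)·w` is a projection of `V^{⊗n}` onto
`Lₙ(V)`, i.e. `w x ∈ L(V)` and `w (w x) = n • w x`. -/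
theorem stmt8 (k : Type*) [Field k] [CharZero k] (V : Type*) [AddCommGroup V] [Module k V]
    (n : ℕ) (hn : 0 < n)
    (w : TensorAlgebra k V →ₗ[k] TensorAlgebra k V)
    (hw : ∀ v : Fin n → V,
      w ((List.ofFn fun i => TensorAlgebra.ι k (v i)).prod) =
        lnbList (List.ofFn fun i => TensorAlgebra.ι k (v i))) :
    ∀ x ∈ (LinearMap.range (TensorAlgebra.ι k (M := V)) ^ n :
        Submodule k (TensorAlgebra k V)),
      (((n : k) • x - w x = 0) ↔
        x ∈ LieSubalgebra.lieSpan k (TensorAlgebra k V)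
          (Set.range (TensorAlgebra.ι k (M := V)))) ∧
      w x ∈ LieSubalgebra.lieSpan k (TensorAlgebra k V)
        (Set.range (TensorAlgebra.ι k (M := V))) ∧
      w (w x) = (n : k) • w x := by
  intro x hx
  have hwθ := eqOn_dynkinMap_of_eq_lnbList w hw
  obtain ⟨hθL, hθpow⟩ := dynkinMap_mem_lieSpan_inf_pow hx
  have hn' : (n : k) ≠ 0 := Nat.cast_ne_zero.mpr hn.ne'
  refine ⟨⟨fun h => ?_, fun hxL => ?_⟩, hwθ hx ▸ hθL, ?_⟩
  · rw [sub_eq_zero, hwθ hx] at h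
    rw [← inv_smul_smul₀ hn' x, h]
    exact LieSubalgebra.smul_mem _ _ hθL
  · rw [hwθ hx, dynkinMap_eq_smul_of_mem_pow hxL hx, sub_self]
  · rw [hwθ hx, hwθ hθpow, dynkinMap_eq_smul_of_mem_pow hθL hθpow]
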